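/- Let n, p be positive integers, X an n×p real matrix with rows x₁ᵀ,…,xₙᵀ, B a p×p symmetric positive definite matrix, b ∈ ℝᵖ, and y ∈ {0,1}ⁿ. There exists a finite constant c > 0, not depending on w, such that for every w ∈ (0,∞)ⁿ, ∫_{ℝᵖ} π(β|w) · π(w|β) dβ ≤ c ∏_{i=1}^n g(wᵢ), where π(β|w) = (2π)^{−p/2} det(Σ(w))^{−1/2} exp{−(1/2)(β−μ(w))ᵀ Σ(w)⁻¹ (β−μ(w))} and π(w|β) = ∏_{i=1}^n cosh(|xᵢᵀβ|/2) exp{−(xᵢᵀβ)² wᵢ/2} g(wᵢ). -/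

import Mathlib

open MeasureTheory Matrix Real

/-- The density of the Pólya-Gamma PG(1,0) distribution. -/
noncomputable def pgDensity (z : ℝ) : ℝ :=
  ∑' k : ℕ, (-1 : ℝ) ^ k * (2 * (k : ℝ) + 1) / Real.sqrt (2 * Real.pi * z ^ 3) *
    Real.exp (-(2 * (k : ℝ) + 1) ^ 2 / (8 * z))

/-- Σ(w) = (Xᵀ Ω(w) X + B⁻¹)⁻¹, with Ω(w) = diag(w₁,…,wₙ). -/
noncomputable def sigmaMat {n p : ℕ} (X : Matrix (Fin n) (Fin p) ℝ)
    (B : Matrix (Fin p) (Fin p) ℝ) (w : Fin n → ℝ) : Matrix (Fin p) (Fin p) ℝ :=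
  (Xᵀ * Matrix.diagonal w * X + B⁻¹)⁻¹

/-- μ(w) = Σ(w)[Xᵀ(y − (1/2)1ₙ) + B⁻¹b]. -/
noncomputable def muVec {n p : ℕ} (X : Matrix (Fin n) (Fin p) ℝ)
    (B : Matrix (Fin p) (Fin p) ℝ) (b : Fin p → ℝ) (y : Fin n → ℝ) (w : Fin n → ℝ) :
    Fin p → ℝ :=
  (sigmaMat X B w) *ᵥ (Xᵀ *ᵥ (fun i => y i - 1 / 2) + B⁻¹ *ᵥ b)

/-- π(β|w) : the N_p(μ(w), Σ(w)) density at β. -/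
noncomputable def piBeta {n p : ℕ} (X : Matrix (Fin n) (Fin p) ℝ)
    (B : Matrix (Fin p) (Fin p) ℝ) (b : Fin p → ℝ) (y : Fin n → ℝ)
    (w : Fin n → ℝ) (β : Fin p → ℝ) : ℝ :=
  (2 * Real.pi) ^ (-(p : ℝ) / 2) * (sigmaMat X B w).det ^ (-(1 : ℝ) / 2) *
    Real.exp (-(1 / 2) *
      ((β - muVec X B b y w) ⬝ᵥ ((sigmaMat X B w)⁻¹ *ᵥ (β - muVec X B b y w))))

/-- π(w|β) = ∏ᵢ cosh(|xᵢᵀβ|/2) exp{−(xᵢᵀβ)² wᵢ/2} g(wᵢ). -/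
noncomputable def piW {n p : ℕ} (X : Matrix (Fin n) (Fin p) ℝ)
    (w : Fin n → ℝ) (β : Fin p → ℝ) : ℝ :=
  ∏ i, (Real.cosh (|(X *ᵥ β) i| / 2) * Real.exp (-((X *ᵥ β) i) ^ 2 * w i / 2) *
    pgDensity (w i))

/-!
Write `A(w) = Xᵀ Ω(w) X + B⁻¹ = Σ(w)⁻¹` and split `π(w|β) = k_w(β) ∏ᵢ g(wᵢ)`, where the kernel
`k_w(β) ≤ exp (∑ᵢ |xᵢᵀβ| / 2)` because `cosh t ≤ exp |t|` and `wᵢ ≥ 0`. Since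
`A(w) μ(w) = Xᵀ(y - ½) + B⁻¹ b =: v` does not depend on `w`, completing the square bounds the
Gaussian exponent by `-½ βᵀA(w)β + βᵀv`. The terms `βᵀv + ∑ᵢ |xᵢᵀβ| / 2`, of linear growth, are
absorbed into `¼ βᵀB⁻¹β ≤ ¼ βᵀA(w)β` up to a constant `D`, as `B⁻¹` is positive definite. What is
left is `(2π)^(-p/2) e^D √(det A(w)) exp (-¼ βᵀA(w)β)`, whose integral `2^(p/2) e^D` no longer
depends on `w`.
-/

open Filter Topology

open scoped MatrixOrder ENNReal

section

variable {ι : Type*} [Fintype ι]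

lemma norm_sq_le_dotProduct_self (v : ι → ℝ) : ‖v‖ ^ 2 ≤ v ⬝ᵥ v := by
  have hv : 0 ≤ v ⬝ᵥ v := by simpa using dotProduct_star_self_nonneg v
  have h : ‖v‖ ≤ √(v ⬝ᵥ v) := by
    refine (pi_norm_le_iff_of_nonneg (sqrt_nonneg _)).2 fun i => ?_
    rw [Real.norm_eq_abs, ← sqrt_sq_eq_abs, sq]
    exact sqrt_le_sqrt <| Finset.single_le_sum (f := fun j => v j * v j)
      (fun j _ => mul_self_nonneg _) (Finset.mem_univ i)
  calc ‖v‖ ^ 2 ≤ √(v ⬝ᵥ v) ^ 2 := by gcongr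
    _ = v ⬝ᵥ v := sq_sqrt hv

lemma abs_dotProduct_le_norm_mul_sum_abs (u v : ι → ℝ) : |u ⬝ᵥ v| ≤ ‖u‖ * ∑ i, |v i| := by
  rw [Finset.mul_sum]
  refine (Finset.abs_sum_le_sum_abs _ _).trans (Finset.sum_le_sum fun i _ => ?_)
  rw [abs_mul]
  exact mul_le_mul_of_nonneg_right (norm_le_pi_norm u i) (abs_nonneg _)

lemma exists_dotProduct_add_sum_abs_mulVec_le {m : Type*} [Fintype m]
    (X : Matrix m ι ℝ) (v : ι → ℝ) :
    ∃ K : ℝ, ∀ β : ι → ℝ, β ⬝ᵥ v + ∑ i, |(X *ᵥ β) i| / 2 ≤ K * ‖β‖ := by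
  refine ⟨∑ j, |v j| + ∑ i, (∑ j, |X i j|) / 2, fun β => ?_⟩
  have hv := (le_abs_self _).trans (abs_dotProduct_le_norm_mul_sum_abs β v)
  have hX : ∀ i, |(X *ᵥ β) i| / 2 ≤ ‖β‖ * ((∑ j, |X i j|) / 2) := fun i => by
    rw [mul_div_assoc']
    gcongr
    rw [mulVec, dotProduct_comm]
    exact abs_dotProduct_le_norm_mul_sum_abs β (X i)
  calc β ⬝ᵥ v + ∑ i, |(X *ᵥ β) i| / 2 ≤ ‖β‖ * ∑ j, |v j| + ∑ i, ‖β‖ * ((∑ j, |X i j|) / 2) :=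
        add_le_add hv (Finset.sum_le_sum fun i _ => hX i)
    _ = _ := by rw [← Finset.mul_sum]; ring

lemma Matrix.PosSemidef.dotProduct_mulVec_sub_two_mul_le {A : Matrix ι ι ℝ} (hA : A.PosSemidef)
    (β μ : ι → ℝ) : β ⬝ᵥ A *ᵥ β - 2 * (β ⬝ᵥ A *ᵥ μ) ≤ (β - μ) ⬝ᵥ A *ᵥ (β - μ) := by
  have hμ : 0 ≤ μ ⬝ᵥ A *ᵥ μ := by simpa using hA.dotProduct_mulVec_nonneg μ
  have hsymm : μ ⬝ᵥ A *ᵥ β = β ⬝ᵥ A *ᵥ μ := by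
    rw [dotProduct_mulVec, ← mulVec_transpose, dotProduct_comm,
      ← conjTranspose_eq_transpose_of_trivial, hA.isHermitian.eq]
  simp only [mulVec_sub, sub_dotProduct, dotProduct_sub, hsymm]
  linarith

lemma lintegral_exp_neg_mul_dotProduct_self {a : ℝ} (ha : 0 < a) :
    ∫⁻ u : ι → ℝ, ENNReal.ofReal (exp (-a * (u ⬝ᵥ u))) =
      ENNReal.ofReal ((π / a) ^ ((Fintype.card ι : ℝ) / 2)) := by
  have hmeas : Measurable fun u : ι → ℝ => ENNReal.ofReal (exp (-a * (u ⬝ᵥ u))) := by fun_prop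
  rw [← (EuclideanSpace.volume_preserving_symm_measurableEquiv_toLp ι).lintegral_comp hmeas]
  have hnorm : ∀ x : EuclideanSpace ℝ ι, (MeasurableEquiv.toLp 2 (ι → ℝ)).symm x ⬝ᵥ
      (MeasurableEquiv.toLp 2 (ι → ℝ)).symm x = ‖x‖ ^ 2 := fun x => by
    rw [EuclideanSpace.norm_eq, sq_sqrt (by positivity)]
    simp [dotProduct, sq]
  simp_rw [hnorm]
  have hint : Integrable fun x : EuclideanSpace ℝ ι => exp (-a * ‖x‖ ^ 2) := by
    simpa [Complex.norm_exp, ← Complex.ofReal_pow] using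
      (GaussianFourier.integrable_cexp_neg_mul_sq_norm_add (V := EuclideanSpace ℝ ι)
        (b := (a : ℂ)) (by simpa using ha) 0 0).norm
  rw [← ofReal_integral_eq_lintegral_ofReal hint (ae_of_all _ fun _ => (exp_pos _).le),
    GaussianFourier.integral_rexp_neg_mul_sq_norm ha, finrank_euclideanSpace]

variable [DecidableEq ι]

lemma Matrix.PosDef.exists_pos_mul_dotProduct_self_le {A : Matrix ι ι ℝ} (hA : A.PosDef) :
    ∃ r : ℝ, 0 < r ∧ ∀ v : ι → ℝ, r * (v ⬝ᵥ v) ≤ v ⬝ᵥ A *ᵥ v := by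
  have hspec : ∀ᶠ r in 𝓝[>] (0 : ℝ), 0 < r ∧ ∀ x ∈ spectrum ℝ A, r ≤ x :=
    eventually_mem_nhdsWithin.and <| A.finite_spectrum.eventually_all.2 fun x hx =>
      eventually_of_mem (Ioo_mem_nhdsGT (hA.isStrictlyPositive.spectrum_pos hx)) fun r hr => hr.2.le
  obtain ⟨r, hr, hrA⟩ := hspec.exists
  refine ⟨r, hr, fun v => ?_⟩
  have hle : algebraMap ℝ (Matrix ι ι ℝ) r ≤ A :=
    algebraMap_le_of_le_spectrum hrA (ha := hA.isHermitian.isSelfAdjoint)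
  have := (Matrix.le_iff.1 hle).dotProduct_mulVec_nonneg v
  simp only [star_trivial, Algebra.algebraMap_eq_smul_one, sub_mulVec, smul_mulVec, one_mulVec,
    dotProduct_sub, dotProduct_smul, smul_eq_mul] at this
  linarith

lemma Matrix.PosDef.exists_mul_norm_le_dotProduct_mulVec_add {A : Matrix ι ι ℝ} (hA : A.PosDef)
    (K : ℝ) {ε : ℝ} (hε : 0 < ε) : ∃ D : ℝ, ∀ v : ι → ℝ, K * ‖v‖ ≤ ε * (v ⬝ᵥ A *ᵥ v) + D := by
  obtain ⟨r, hr, hrA⟩ := hA.exists_pos_mul_dotProduct_self_le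
  have hεr : 0 < ε * r := mul_pos hε hr
  refine ⟨K ^ 2 / (4 * (ε * r)), fun v => ?_⟩
  have hamgm : K * ‖v‖ ≤ ε * r * ‖v‖ ^ 2 + K ^ 2 / (4 * (ε * r)) := by
    have h : ε * r * ‖v‖ ^ 2 + K ^ 2 / (4 * (ε * r)) - K * ‖v‖
        = (2 * (ε * r) * ‖v‖ - K) ^ 2 / (4 * (ε * r)) := by
      field_simp; ring
    rw [← sub_nonneg, h]
    positivity
  calc K * ‖v‖ ≤ ε * r * ‖v‖ ^ 2 + K ^ 2 / (4 * (ε * r)) := hamgm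
    _ ≤ ε * (r * (v ⬝ᵥ v)) + K ^ 2 / (4 * (ε * r)) := by
        rw [mul_assoc]; gcongr; exact norm_sq_le_dotProduct_self v
    _ ≤ ε * (v ⬝ᵥ A *ᵥ v) + K ^ 2 / (4 * (ε * r)) := by gcongr; exact hrA v

lemma lintegral_comp_mulVec {M : Matrix ι ι ℝ} (hM : M.det ≠ 0) {f : (ι → ℝ) → ℝ≥0∞}
    (hf : Measurable f) :
    ∫⁻ v, f (M *ᵥ v) = ENNReal.ofReal |M.det|⁻¹ * ∫⁻ u, f u := by
  rw [← abs_inv, ← smul_eq_mul, ← lintegral_smul_measure,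
    ← Real.map_matrix_volume_pi_eq_smul_volume_pi hM,
    lintegral_map hf (toLin' M).continuous_of_finiteDimensional.measurable]
  rfl

lemma Matrix.PosDef.lintegral_exp_neg_mul_dotProduct_mulVec {A : Matrix ι ι ℝ} (hA : A.PosDef)
    {a : ℝ} (ha : 0 < a) :
    ∫⁻ v : ι → ℝ, ENNReal.ofReal (exp (-a * (v ⬝ᵥ A *ᵥ v))) =
      ENNReal.ofReal ((π / a) ^ ((Fintype.card ι : ℝ) / 2) / √A.det) := by
  set S := CFC.sqrt A
  have hSS : S * S = A := CFC.sqrt_mul_sqrt_self A hA.posSemidef.nonneg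
  have hST : Sᵀ = S := by
    simpa [IsHermitian, conjTranspose_eq_transpose_of_trivial] using
      (CFC.sqrt_nonneg A).posSemidef.isHermitian
  have hdetS : S.det = √A.det := by simpa using hA.posSemidef.det_sqrt
  have hquad : ∀ v : ι → ℝ, v ⬝ᵥ A *ᵥ v = S *ᵥ v ⬝ᵥ S *ᵥ v := fun v => by
    rw [← hSS, ← mulVec_mulVec, dotProduct_mulVec, ← mulVec_transpose, hST]
  simp_rw [hquad]
  rw [lintegral_comp_mulVec (f := fun u => ENNReal.ofReal (exp (-a * (u ⬝ᵥ u))))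
      (by rw [hdetS]; exact (sqrt_pos.2 hA.det_pos).ne') (by fun_prop),
    lintegral_exp_neg_mul_dotProduct_self ha, hdetS, abs_of_nonneg (sqrt_nonneg _),
    ← ENNReal.ofReal_mul (by positivity), inv_mul_eq_div]

end

noncomputable def precisionMat {n p : ℕ} (X : Matrix (Fin n) (Fin p) ℝ)
    (B : Matrix (Fin p) (Fin p) ℝ) (w : Fin n → ℝ) : Matrix (Fin p) (Fin p) ℝ :=
  Xᵀ * diagonal w * X + B⁻¹

noncomputable def muRhs {n p : ℕ} (X : Matrix (Fin n) (Fin p) ℝ)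
    (B : Matrix (Fin p) (Fin p) ℝ) (b : Fin p → ℝ) (y : Fin n → ℝ) : Fin p → ℝ :=
  Xᵀ *ᵥ (fun i => y i - 1 / 2) + B⁻¹ *ᵥ b

noncomputable def piWKernel {n p : ℕ} (X : Matrix (Fin n) (Fin p) ℝ)
    (w : Fin n → ℝ) (β : Fin p → ℝ) : ℝ :=
  ∏ i, (cosh (|(X *ᵥ β) i| / 2) * exp (-((X *ᵥ β) i) ^ 2 * w i / 2))

section Model

variable {n p : ℕ} (X : Matrix (Fin n) (Fin p) ℝ) {B : Matrix (Fin p) (Fin p) ℝ}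
  (b : Fin p → ℝ) (y : Fin n → ℝ) {w : Fin n → ℝ} (β : Fin p → ℝ)

lemma piW_eq_piWKernel_mul : piW X w β = piWKernel X w β * ∏ i, pgDensity (w i) := by
  rw [piW, piWKernel, ← Finset.prod_mul_distrib]

lemma piWKernel_nonneg : 0 ≤ piWKernel X w β :=
  Finset.prod_nonneg fun _ _ => by positivity

lemma piWKernel_le_exp (hw : ∀ i, 0 ≤ w i) :
    piWKernel X w β ≤ exp (∑ i, |(X *ᵥ β) i| / 2) := by
  rw [exp_sum]
  refine Finset.prod_le_prod (fun i _ => by positivity) fun i _ => ?_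
  have ht : 0 ≤ |(X *ᵥ β) i| / 2 := by positivity
  have hcosh : cosh (|(X *ᵥ β) i| / 2) ≤ exp (|(X *ᵥ β) i| / 2) := by
    linarith [exp_sub_cosh (|(X *ᵥ β) i| / 2), sinh_nonneg_iff.2 ht]
  have hexp : exp (-((X *ᵥ β) i) ^ 2 * w i / 2) ≤ 1 :=
    exp_le_one_iff.2 (by nlinarith [sq_nonneg ((X *ᵥ β) i), hw i])
  calc cosh (|(X *ᵥ β) i| / 2) * exp (-((X *ᵥ β) i) ^ 2 * w i / 2)
      ≤ exp (|(X *ᵥ β) i| / 2) * 1 := by gcongr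
    _ = exp (|(X *ᵥ β) i| / 2) := mul_one _

lemma posSemidef_transpose_mul_diagonal_mul (hw : ∀ i, 0 ≤ w i) :
    (Xᵀ * diagonal w * X).PosSemidef := by
  simpa [conjTranspose_eq_transpose_of_trivial] using
    (posSemidef_diagonal_iff.2 hw).conjTranspose_mul_mul_same X

lemma posDef_precisionMat (hB : B.PosDef) (hw : ∀ i, 0 ≤ w i) :
    (precisionMat X B w).PosDef :=
  Matrix.PosDef.posSemidef_add (posSemidef_transpose_mul_diagonal_mul X hw) hB.inv

lemma dotProduct_inv_mulVec_le_precisionMat (hw : ∀ i, 0 ≤ w i) :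
    β ⬝ᵥ B⁻¹ *ᵥ β ≤ β ⬝ᵥ precisionMat X B w *ᵥ β := by
  have := (posSemidef_transpose_mul_diagonal_mul X hw).dotProduct_mulVec_nonneg β
  rw [precisionMat, add_mulVec, dotProduct_add]
  simp only [star_trivial] at this
  linarith

lemma precisionMat_mulVec_muVec (hB : B.PosDef) (hw : ∀ i, 0 ≤ w i) :
    precisionMat X B w *ᵥ muVec X B b y w = muRhs X B b y := by
  rw [muVec, sigmaMat, mulVec_mulVec, ← precisionMat,
    mul_nonsing_inv _ (posDef_precisionMat X hB hw).det_pos.ne'.isUnit, one_mulVec, muRhs]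

lemma piBeta_eq (hB : B.PosDef) (hw : ∀ i, 0 ≤ w i) :
    piBeta X B b y w β = (2 * π) ^ (-(p : ℝ) / 2) * √(precisionMat X B w).det *
      exp (-(1 / 2) * ((β - muVec X B b y w) ⬝ᵥ
        precisionMat X B w *ᵥ (β - muVec X B b y w))) := by
  have hdet := (posDef_precisionMat X hB hw).det_pos
  have hsigma : sigmaMat X B w = (precisionMat X B w)⁻¹ := rfl
  rw [piBeta, hsigma, nonsing_inv_nonsing_inv _ hdet.ne'.isUnit, det_nonsing_inv,
    Ring.inverse_eq_inv, show (-1 : ℝ) / 2 = -(1 / 2) by norm_num,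
    rpow_neg (inv_nonneg.2 hdet.le), inv_rpow hdet.le, inv_inv, sqrt_eq_rpow]

lemma piBeta_nonneg (hB : B.PosDef) (hw : ∀ i, 0 ≤ w i) : 0 ≤ piBeta X B b y w β := by
  rw [piBeta_eq X b y β hB hw]
  positivity

lemma piBeta_le (hB : B.PosDef) (hw : ∀ i, 0 ≤ w i) :
    piBeta X B b y w β ≤ (2 * π) ^ (-(p : ℝ) / 2) * √(precisionMat X B w).det *
      exp (-(1 / 2) * (β ⬝ᵥ precisionMat X B w *ᵥ β) + β ⬝ᵥ muRhs X B b y) := by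
  have hquad := (posDef_precisionMat X hB hw).posSemidef.dotProduct_mulVec_sub_two_mul_le β
    (muVec X B b y w)
  rw [precisionMat_mulVec_muVec X b y hB hw] at hquad
  rw [piBeta_eq X b y β hB hw]
  gcongr
  linarith

lemma piBeta_mul_piWKernel_le (hB : B.PosDef) (hw : ∀ i, 0 ≤ w i) {D : ℝ}
    (hD : ∀ β, β ⬝ᵥ muRhs X B b y + ∑ i, |(X *ᵥ β) i| / 2 ≤ 1 / 4 * (β ⬝ᵥ B⁻¹ *ᵥ β) + D) :
    piBeta X B b y w β * piWKernel X w β ≤ exp D * (2 * π) ^ (-(p : ℝ) / 2) *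
      √(precisionMat X B w).det * exp (-(1 / 4) * (β ⬝ᵥ precisionMat X B w *ᵥ β)) := by
  set q := β ⬝ᵥ precisionMat X B w *ᵥ β
  have hq := dotProduct_inv_mulVec_le_precisionMat X (B := B) β hw
  calc piBeta X B b y w β * piWKernel X w β
      ≤ (2 * π) ^ (-(p : ℝ) / 2) * √(precisionMat X B w).det *
          exp (-(1 / 2) * q + β ⬝ᵥ muRhs X B b y) * exp (∑ i, |(X *ᵥ β) i| / 2) :=
        mul_le_mul (piBeta_le X b y β hB hw) (piWKernel_le_exp X β hw)
          (piWKernel_nonneg X β) (by positivity)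
    _ ≤ (2 * π) ^ (-(p : ℝ) / 2) * √(precisionMat X B w).det *
          exp (-(1 / 2) * q + (1 / 4 * q + D)) := by
        rw [mul_assoc, ← exp_add, add_assoc]
        refine mul_le_mul_of_nonneg_left (exp_le_exp.2 ?_) (by positivity)
        linarith [hD β]
    _ = _ := by
        rw [show -(1 / 2) * q + (1 / 4 * q + D) = D + -(1 / 4) * q by ring, exp_add]
        ring

lemma lintegral_piBeta_mul_piWKernel_le (hB : B.PosDef) (hw : ∀ i, 0 ≤ w i) {D : ℝ}
    (hD : ∀ β, β ⬝ᵥ muRhs X B b y + ∑ i, |(X *ᵥ β) i| / 2 ≤ 1 / 4 * (β ⬝ᵥ B⁻¹ *ᵥ β) + D) :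
    ∫⁻ β, ENNReal.ofReal (piBeta X B b y w β * piWKernel X w β) ≤
      ENNReal.ofReal (2 ^ ((p : ℝ) / 2) * exp D) := by
  set C := exp D * (2 * π) ^ (-(p : ℝ) / 2) * √(precisionMat X B w).det with hC_def
  have hC : 0 ≤ C := by positivity
  have hdet := (posDef_precisionMat X hB hw).det_pos
  have hconst : (2 * π) ^ (-(p : ℝ) / 2) * (π / (1 / 4)) ^ ((p : ℝ) / 2) = 2 ^ ((p : ℝ) / 2) := by
    rw [show π / (1 / 4) = 2 * (2 * π) by ring,
      mul_rpow (x := 2) (y := 2 * π) (by norm_num) (by positivity), neg_div,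
      rpow_neg (by positivity), mul_comm ((2 : ℝ) ^ _), inv_mul_cancel_left₀ (by positivity)]
  calc ∫⁻ β, ENNReal.ofReal (piBeta X B b y w β * piWKernel X w β)
      ≤ ∫⁻ β, ENNReal.ofReal C *
          ENNReal.ofReal (exp (-(1 / 4) * (β ⬝ᵥ precisionMat X B w *ᵥ β))) :=
        lintegral_mono fun β => by
          rw [← ENNReal.ofReal_mul hC]
          exact ENNReal.ofReal_le_ofReal (piBeta_mul_piWKernel_le X b y β hB hw hD)
    _ = ENNReal.ofReal (C * ((π / (1 / 4)) ^ ((p : ℝ) / 2) / √(precisionMat X B w).det)) := by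
        rw [lintegral_const_mul' _ _ ENNReal.ofReal_ne_top,
          (posDef_precisionMat X hB hw).lintegral_exp_neg_mul_dotProduct_mulVec (by norm_num),
          Fintype.card_fin, ENNReal.ofReal_mul hC]
    _ = ENNReal.ofReal (2 ^ ((p : ℝ) / 2) * exp D) := by
        congr 1
        rw [← hconst, hC_def, mul_div_assoc', div_eq_iff (sqrt_pos.2 hdet).ne']
        ring

end Model

theorem stmt6 {n p : ℕ}
    (X : Matrix (Fin n) (Fin p) ℝ) (B : Matrix (Fin p) (Fin p) ℝ) (hB : B.PosDef)
    (b : Fin p → ℝ) (y : Fin n → ℝ) :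
    ∃ c : ℝ, 0 < c ∧ ∀ w : Fin n → ℝ, (∀ i, 0 < w i) →
      ∫⁻ β : Fin p → ℝ, ENNReal.ofReal (piBeta X B b y w β * piW X w β) ≤
        ENNReal.ofReal (c * ∏ i, pgDensity (w i)) := by
  obtain ⟨K, hK⟩ := exists_dotProduct_add_sum_abs_mulVec_le X (muRhs X B b y)
  obtain ⟨D, hD⟩ := hB.inv.exists_mul_norm_le_dotProduct_mulVec_add K (ε := 1 / 4) (by norm_num)
  refine ⟨2 ^ ((p : ℝ) / 2) * exp D, by positivity, fun w hw => ?_⟩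
  have hw₀ : ∀ i, 0 ≤ w i := fun i => (hw i).le
  calc ∫⁻ β, ENNReal.ofReal (piBeta X B b y w β * piW X w β)
      = (∫⁻ β, ENNReal.ofReal (piBeta X B b y w β * piWKernel X w β)) *
          ENNReal.ofReal (∏ i, pgDensity (w i)) := by
        -- `ofReal (a * t) = ofReal a * ofReal t` for `a ≥ 0` whatever the sign of `t`
        rw [← lintegral_mul_const' _ _ ENNReal.ofReal_ne_top]
        refine lintegral_congr fun β => ?_
        rw [piW_eq_piWKernel_mul, ← mul_assoc, ENNReal.ofReal_mul
          (mul_nonneg (piBeta_nonneg X b y β hB hw₀) (piWKernel_nonneg X β))]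
    _ ≤ ENNReal.ofReal (2 ^ ((p : ℝ) / 2) * exp D) * ENNReal.ofReal (∏ i, pgDensity (w i)) := by
        gcongr
        exact lintegral_piBeta_mul_piWKernel_le X b y hB hw₀ fun β => (hK β).trans (hD β)
    _ = ENNReal.ofReal (2 ^ ((p : ℝ) / 2) * exp D * ∏ i, pgDensity (w i)) :=
        (ENNReal.ofReal_mul (by positivity)).symm
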